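/- Let a > 0, b ∈ ℝ, S ∈ ℝ, x ∈ ℝ, and let φ : ℝ → ℝ be a smooth function with compact support. Define I(Δt) = ∫_ℝ q(Δt, y - x) φ(y) dy for Δt > 0, where q(t,y) = e^{St}(2πat)^{-1/2} exp(-(y-bt)²/(2at)). Then as Δt → 0⁺, I(Δt) = φ(x) + Δt·(b φ'(x) + (a/2) φ''(x) + S φ(x)) + O(Δt^{3/2}); that is, the function Δt ↦ I(Δt) - φ(x) - Δt·(b φ'(x) + (a/2) φ''(x) + S φ(x)) is big-O of Δt^{3/2} along the filter of positive reals tending to 0. -/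

import Mathlib

open Real MeasureTheory Asymptotics Filter Set

noncomputable def gk : ℝ → ℝ := fun z => Real.exp (-(1/2) * z ^ 2)

lemma gk_pos (z : ℝ) : 0 < gk z := Real.exp_pos _

lemma gk_cont : Continuous gk := by
  unfold gk; continuity

lemma gk_even (z : ℝ) : gk (-z) = gk z := by simp [gk]

lemma integrable_gk : Integrable gk := integrable_exp_neg_mul_sq (by norm_num)

lemma integrable_pow_gk (k : ℕ) : Integrable (fun z : ℝ => |z| ^ k * gk z) := by
  have h : Integrable (fun z : ℝ => z ^ k * gk z) := by
    have h2 := integrable_rpow_mul_exp_neg_mul_sq (by norm_num : (0:ℝ) < 1/2) (s := (k:ℝ))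
      (by exact_mod_cast neg_one_lt_zero.trans_le (Nat.cast_nonneg k))
    simpa [Real.rpow_natCast, gk] using h2
  exact h.abs.congr (ae_of_all _ fun z => by
    simp [abs_mul, abs_pow, abs_of_pos (gk_pos z)])

lemma integrable_sq_gk : Integrable (fun z : ℝ => z ^ 2 * gk z) :=
  (integrable_pow_gk 2).congr (ae_of_all _ fun z => by simp [sq_abs])

lemma integrable_z_gk : Integrable (fun z : ℝ => z * gk z) := by
  simpa [gk] using integrable_mul_exp_neg_mul_sq (by norm_num : (0:ℝ) < 1/2)

lemma integral_gk : ∫ z : ℝ, gk z = Real.sqrt (2 * π) := by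
  unfold gk
  rw [integral_gaussian]
  rw [show π / (1/2 : ℝ) = 2 * π by ring]

lemma integral_z_gk_eq_zero : ∫ z : ℝ, z * gk z = 0 := by
  have h := integral_neg_eq_self (fun z : ℝ => z * gk z) (volume : Measure ℝ)
  have h1 : (fun z : ℝ => (-z) * gk (-z)) = fun z : ℝ => -(z * gk z) := by
    funext z; rw [gk_even]; ring
  rw [h1, integral_neg] at h
  linarith

lemma hasDerivAt_z_gk (z : ℝ) :
    HasDerivAt (fun z : ℝ => z * gk z) (gk z - z ^ 2 * gk z) z := by
  have hu : HasDerivAt (fun z : ℝ => -(1/2) * z ^ 2) (-z) z := by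
    have h2 := (hasDerivAt_pow 2 z).const_mul (-(1/2) : ℝ)
    refine h2.congr_deriv ?_
    norm_num; ring
  have hg : HasDerivAt gk (-z * gk z) z := by
    have h3 := hu.exp
    refine h3.congr_deriv ?_
    unfold gk; ring
  have h4 := (hasDerivAt_id z).mul hg
  refine h4.congr_deriv ?_
  simp only [id_eq]; ring

lemma tendsto_z_gk : Tendsto (fun z : ℝ => z * gk z) atTop (nhds 0) := by
  have h1 := rpow_mul_exp_neg_mul_sq_isLittleO_exp_neg (by norm_num : (0:ℝ) < 1/2) 1
  have h0 : Tendsto (fun x : ℝ => Real.exp (-x)) atTop (nhds 0) :=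
    Real.tendsto_exp_atBot.comp tendsto_neg_atTop_atBot
  have hhalf : Tendsto (fun x : ℝ => (1/2 : ℝ) * x) atTop atTop :=
    tendsto_id.const_mul_atTop (by norm_num)
  have h0' : Tendsto (fun x : ℝ => Real.exp (-(1/2) * x)) atTop (nhds 0) := by
    have h5 := h0.comp hhalf
    have heq : (fun x : ℝ => Real.exp (-(1/2) * x))
        = (fun x : ℝ => Real.exp (-x)) ∘ (fun x : ℝ => (1/2 : ℝ) * x) := by
      funext x; simp only [Function.comp_apply]; congr 1; ring
    rw [heq]; exact h5
  have h2 := h1.isBigO.trans_tendsto h0' 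
  simpa [gk, Real.rpow_one] using h2

lemma integral_Ioi_gk_sub : ∫ z in Ioi (0:ℝ), (gk z - z ^ 2 * gk z) = 0 := by
  have key := integral_Ioi_of_hasDerivAt_of_tendsto' (a := 0) (m := 0)
    (f := fun z : ℝ => z * gk z) (f' := fun z => gk z - z ^ 2 * gk z)
    (fun z _ => hasDerivAt_z_gk z)
    ((integrable_gk.sub integrable_sq_gk).integrableOn) tendsto_z_gk
  simpa using key

lemma integral_z_sq_gk : ∫ z : ℝ, z ^ 2 * gk z = Real.sqrt (2 * π) := by
  have hint : Integrable (fun z : ℝ => gk z - z ^ 2 * gk z) := integrable_gk.sub integrable_sq_gk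
  have hIic : ∫ z in Iic (0:ℝ), (gk z - z ^ 2 * gk z) = 0 := by
    have h := integral_comp_neg_Iic (c := (0:ℝ)) (f := fun z : ℝ => gk z - z ^ 2 * gk z)
    simp only [gk_even, neg_sq, neg_zero] at h
    rw [h]
    exact integral_Ioi_gk_sub
  have htot := integral_add_compl (measurableSet_Iic (a := (0:ℝ))) hint
  rw [compl_Iic] at htot
  have h0 : (∫ z : ℝ, (gk z - z ^ 2 * gk z)) = 0 := by
    rw [← htot, hIic, integral_Ioi_gk_sub]; ring
  have hsub := integral_sub integrable_gk integrable_sq_gk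
  rw [h0] at hsub
  rw [integral_gk] at hsub
  linarith

lemma integral_quad_gk (p q r : ℝ) :
    ∫ z : ℝ, gk z * (p + q * z + r * z ^ 2) = (p + r) * Real.sqrt (2 * π) := by
  have heq : (fun z : ℝ => gk z * (p + q * z + r * z ^ 2))
      = fun z : ℝ => (p * gk z + q * (z * gk z)) + r * (z ^ 2 * gk z) := by
    funext z; ring
  have h1 : Integrable (fun z : ℝ => p * gk z) := integrable_gk.const_mul p
  have h2 : Integrable (fun z : ℝ => q * (z * gk z)) := integrable_z_gk.const_mul q
  have h3 : Integrable (fun z : ℝ => r * (z ^ 2 * gk z)) := integrable_sq_gk.const_mul r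
  have h12 : Integrable (fun z : ℝ => p * gk z + q * (z * gk z)) := h1.add h2
  rw [heq, integral_add h12 h3, integral_add h1 h2, integral_const_mul, integral_const_mul,
    integral_const_mul, integral_gk, integral_z_gk_eq_zero, integral_z_sq_gk]
  ring

lemma cube_add_le (p q : ℝ) (hp : 0 ≤ p) (hq : 0 ≤ q) :
    (p + q) ^ 3 ≤ 4 * p ^ 3 + 4 * q ^ 3 := by
  nlinarith [sq_nonneg (p - q), mul_nonneg hp hq, mul_nonneg (mul_nonneg hp hq) hp,
    mul_nonneg (mul_nonneg hp hq) hq, sq_nonneg (p + q), mul_nonneg (sq_nonneg (p - q)) hp,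
    mul_nonneg (sq_nonneg (p - q)) hq]

/-- Third-order Taylor bound for a smooth compactly supported function. -/
lemma taylor3 (φ : ℝ → ℝ) (hφ : ContDiff ℝ (⊤ : ℕ∞) φ) (hφsupp : HasCompactSupport φ) (x : ℝ) :
    ∃ M : ℝ, 0 ≤ M ∧ ∀ h : ℝ,
      |φ (x + h) - φ x - h * deriv φ x - h ^ 2 / 2 * deriv (deriv φ) x| ≤ M * |h| ^ 3 := by
  have hφ' : ContDiff ℝ (((⊤ : ℕ∞)) : WithTop ℕ∞) φ := hφ.of_le (by simp)
  have hd1 : ContDiff ℝ (((⊤ : ℕ∞)) : WithTop ℕ∞) (deriv φ) := (contDiff_infty_iff_deriv.mp hφ').2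
  have hd2 : ContDiff ℝ (((⊤ : ℕ∞)) : WithTop ℕ∞) (deriv (deriv φ)) :=
    (contDiff_infty_iff_deriv.mp hd1).2
  have hd3 : ContDiff ℝ (((⊤ : ℕ∞)) : WithTop ℕ∞) (deriv (deriv (deriv φ))) :=
    (contDiff_infty_iff_deriv.mp hd2).2
  have hs1 : HasCompactSupport (deriv φ) := hφsupp.deriv
  have hs2 : HasCompactSupport (deriv (deriv φ)) := hs1.deriv
  have hs3 : HasCompactSupport (deriv (deriv (deriv φ))) := hs2.deriv
  obtain ⟨M, hM⟩ := hd3.continuous.bounded_above_of_compact_support hs3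
  have hM0 : 0 ≤ M := le_trans (norm_nonneg _) (hM 0)
  -- Lipschitz bound for the second derivative
  have hlip : ∀ p q : ℝ, |deriv (deriv φ) p - deriv (deriv φ) q| ≤ M * |p - q| := by
    intro p q
    have := convex_univ.norm_image_sub_le_of_norm_hasDerivWithin_le
      (f := deriv (deriv φ)) (f' := deriv (deriv (deriv φ))) (C := M) (s := (univ : Set ℝ))
      (fun t _ => ((hd2.differentiable (by simp) t).hasDerivAt).hasDerivWithinAt)
      (fun t _ => hM t) (mem_univ q) (mem_univ p)
    simpa [Real.norm_eq_abs] using this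
  set B := deriv φ x with hB
  set C := deriv (deriv φ) x with hC
  refine ⟨M, hM0, fun h => ?_⟩
  have habs : ∀ u t : ℝ, t ∈ uIcc 0 u → |t| ≤ |u| := by
    intro u t ht
    rcases mem_uIcc.mp ht with ⟨h1, h2⟩ | ⟨h1, h2⟩ <;>
      cases abs_cases t <;> cases abs_cases u <;> linarith
  -- step A : bound on e t := deriv φ (x+t) - deriv φ x - t * C
  have stepA : ∀ t : ℝ, |deriv φ (x + t) - B - t * C| ≤ M * t ^ 2 := by
    intro t
    have hder : ∀ s : ℝ, s ∈ uIcc 0 t →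
        HasDerivWithinAt (fun s : ℝ => deriv φ (x + s) - B - s * C)
          (deriv (deriv φ) (x + s) - C) (uIcc 0 t) s := by
      intro s _
      have h1 : HasDerivAt (fun s : ℝ => deriv φ (x + s)) (deriv (deriv φ) (x + s)) s := by
        have := ((hd1.differentiable (by simp) (x + s)).hasDerivAt).comp s
          ((hasDerivAt_id s).const_add x)
        simpa [Function.comp_def] using this
      have h2 : HasDerivAt (fun s : ℝ => deriv φ (x + s) - B - s * C)
          (deriv (deriv φ) (x + s) - (1 * C)) s :=
        (h1.sub_const B).sub ((hasDerivAt_id s).mul_const C)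
      simpa using h2.hasDerivWithinAt
    have hbd : ∀ s ∈ uIcc 0 t, ‖deriv (deriv φ) (x + s) - C‖ ≤ M * |t| := by
      intro s hs
      have := hlip (x + s) x
      have h3 : |s| ≤ |t| := habs t s hs
      have h4 : |x + s - x| = |s| := by congr 1; ring
      rw [Real.norm_eq_abs]
      calc |deriv (deriv φ) (x + s) - C| ≤ M * |x + s - x| := this
        _ = M * |s| := by rw [h4]
        _ ≤ M * |t| := by nlinarith [abs_nonneg s]
    have hmvt := (convex_uIcc (0:ℝ) t).norm_image_sub_le_of_norm_hasDerivWithin_le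
      hder hbd left_mem_uIcc right_mem_uIcc
    have h5 : deriv φ (x + 0) - B - 0 * C = 0 := by simp [hB]
    rw [h5, sub_zero, sub_zero, Real.norm_eq_abs, Real.norm_eq_abs] at hmvt
    calc |deriv φ (x + t) - B - t * C| ≤ M * |t| * |t| := hmvt
      _ = M * t ^ 2 := by rw [mul_assoc, ← sq_abs]; ring
  -- step B
  have hder2 : ∀ s : ℝ, s ∈ uIcc 0 h →
      HasDerivWithinAt (fun s : ℝ => φ (x + s) - φ x - s * B - s ^ 2 / 2 * C)
        (deriv φ (x + s) - B - s * C) (uIcc 0 h) s := by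
    intro s _
    have h1 : HasDerivAt (fun s : ℝ => φ (x + s)) (deriv φ (x + s)) s := by
      have := ((hφ'.differentiable (by simp) (x + s)).hasDerivAt).comp s
        ((hasDerivAt_id s).const_add x)
      simpa [Function.comp_def] using this
    have h2 : HasDerivAt (fun s : ℝ => s ^ 2 / 2 * C) (s * C) s := by
      have h3 := ((hasDerivAt_pow 2 s).div_const 2).mul_const C
      refine h3.congr_deriv ?_
      norm_num
    have h4 : HasDerivAt (fun s : ℝ => φ (x + s) - φ x - s * B - s ^ 2 / 2 * C)
        (deriv φ (x + s) - 1 * B - s * C) s :=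
      ((h1.sub_const (φ x)).sub ((hasDerivAt_id s).mul_const B)).sub h2
    simpa using h4.hasDerivWithinAt
  have hbd2 : ∀ s ∈ uIcc 0 h, ‖deriv φ (x + s) - B - s * C‖ ≤ M * h ^ 2 := by
    intro s hs
    have h3 : |s| ≤ |h| := habs h s hs
    have h6 : s ^ 2 ≤ h ^ 2 := by nlinarith [abs_nonneg s, sq_abs s, sq_abs h]
    rw [Real.norm_eq_abs]
    calc |deriv φ (x + s) - B - s * C| ≤ M * s ^ 2 := stepA s
      _ ≤ M * h ^ 2 := by nlinarith
  have hmvt2 := (convex_uIcc (0:ℝ) h).norm_image_sub_le_of_norm_hasDerivWithin_le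
    hder2 hbd2 left_mem_uIcc right_mem_uIcc
  have h7 : φ (x + 0) - φ x - 0 * B - 0 ^ 2 / 2 * C = 0 := by simp
  rw [h7, sub_zero, sub_zero, Real.norm_eq_abs, Real.norm_eq_abs] at hmvt2
  calc |φ (x + h) - φ x - h * B - h ^ 2 / 2 * C| ≤ M * h ^ 2 * |h| := hmvt2
    _ = M * |h| ^ 3 := by rw [← sq_abs]; ring

lemma change_of_var (a b S x t : ℝ) (ha : 0 < a) (ht : 0 < t) (φ : ℝ → ℝ) :
    (∫ y : ℝ, (Real.exp (S * t) * (2 * π * a * t) ^ (-(1:ℝ)/2) *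
        Real.exp (-(y - x - b * t) ^ 2 / (2 * a * t))) * φ y)
      = Real.exp (S * t) * (Real.sqrt (2 * π))⁻¹ *
        ∫ z : ℝ, gk z * φ (x + b * t + Real.sqrt (a * t) * z) := by
  have hat : 0 < a * t := mul_pos ha ht
  set σ := Real.sqrt (a * t) with hσdef
  have hσ : 0 < σ := Real.sqrt_pos.mpr hat
  have hσ2 : σ ^ 2 = a * t := Real.sq_sqrt hat.le
  have step1 : (∫ y : ℝ, (Real.exp (S * t) * (2 * π * a * t) ^ (-(1:ℝ)/2) *
        Real.exp (-(y - x - b * t) ^ 2 / (2 * a * t))) * φ y)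
      = Real.exp (S * t) * ((2 * π * a * t) ^ (-(1:ℝ)/2) *
        ∫ y : ℝ, Real.exp (-(y - x - b * t) ^ 2 / (2 * a * t)) * φ y) := by
    rw [← integral_const_mul, ← integral_const_mul]
    congr 1; funext y; ring
  have hshift : (∫ y : ℝ, Real.exp (-(y - x - b * t) ^ 2 / (2 * a * t)) * φ y)
      = ∫ u : ℝ, Real.exp (-u ^ 2 / (2 * a * t)) * φ (u + (x + b * t)) := by
    rw [← integral_add_right_eq_self
      (fun y : ℝ => Real.exp (-(y - x - b * t) ^ 2 / (2 * a * t)) * φ y) (x + b * t)]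
    congr 1; funext u
    have h5 : u + (x + b * t) - x - b * t = u := by ring
    rw [h5]
  have hscale : (∫ u : ℝ, Real.exp (-u ^ 2 / (2 * a * t)) * φ (u + (x + b * t)))
      = σ * ∫ z : ℝ, gk z * φ (x + b * t + σ * z) := by
    have h := Measure.integral_comp_mul_left
      (fun u : ℝ => Real.exp (-u ^ 2 / (2 * a * t)) * φ (u + (x + b * t))) σ
    have h2 : (fun z : ℝ => Real.exp (-(σ * z) ^ 2 / (2 * a * t)) * φ (σ * z + (x + b * t)))
        = fun z : ℝ => gk z * φ (x + b * t + σ * z) := by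
      funext z
      have hx1 : -(σ * z) ^ 2 / (2 * a * t) = -(1/2) * z ^ 2 := by
        rw [mul_pow, hσ2]; field_simp
      have hx2 : σ * z + (x + b * t) = x + b * t + σ * z := by ring
      rw [hx1, hx2]; rfl
    rw [h2, abs_of_pos (inv_pos.mpr hσ), smul_eq_mul] at h
    rw [h, ← mul_assoc, mul_inv_cancel₀ (ne_of_gt hσ), one_mul]
  have hconst : (2 * π * a * t) ^ (-(1:ℝ)/2) * σ = (Real.sqrt (2 * π))⁻¹ := by
    have h6 : (2 * π * a * t : ℝ) ^ (-(1:ℝ)/2) = (Real.sqrt (2 * π * a * t))⁻¹ := by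
      rw [show (-(1:ℝ)/2) = -(1/2 : ℝ) by norm_num, Real.rpow_neg (by positivity),
        ← Real.sqrt_eq_rpow]
    have h7 : Real.sqrt (2 * π * a * t) = Real.sqrt (2 * π) * σ := by
      rw [show (2 * π * a * t : ℝ) = (2 * π) * (a * t) by ring,
        Real.sqrt_mul (by positivity)]
    rw [h6, h7, mul_inv]
    field_simp
  rw [step1, hshift, hscale, ← hconst]
  ring

lemma J_est (φ : ℝ → ℝ) (hφc : Continuous φ) (x : ℝ) (M K : ℝ) (hK : ∀ y, |φ y| ≤ K)
    (hTay : ∀ h : ℝ,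
      |φ (x + h) - φ x - h * deriv φ x - h ^ 2 / 2 * deriv (deriv φ) x| ≤ M * |h| ^ 3)
    (hM : 0 ≤ M) (μ σ : ℝ) (hσ : 0 ≤ σ) :
    |(∫ z : ℝ, gk z * φ (x + (μ + σ * z)))
        - (φ x + deriv φ x * μ + deriv (deriv φ) x / 2 * (μ ^ 2 + σ ^ 2)) * Real.sqrt (2 * π)|
      ≤ 4 * M * |μ| ^ 3 * Real.sqrt (2 * π)
        + 4 * M * σ ^ 3 * ∫ z : ℝ, |z| ^ 3 * gk z := by
  set A := φ x with hA
  set B := deriv φ x with hB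
  set C := deriv (deriv φ) x with hC
  set p : ℝ := A + B * μ + C / 2 * μ ^ 2 with hp
  set q : ℝ := B * σ + C * μ * σ with hq
  set r : ℝ := C / 2 * σ ^ 2 with hr
  have hquad := integral_quad_gk p q r
  have hInt1 : Integrable (fun z : ℝ => gk z * φ (x + (μ + σ * z))) := by
    refine Integrable.mono' (integrable_gk.const_mul K) ?_ (ae_of_all _ fun z => ?_)
    · exact (gk_cont.mul (hφc.comp (by continuity))).aestronglyMeasurable
    · rw [Real.norm_eq_abs, abs_mul, abs_of_pos (gk_pos z)]
      have := hK (x + (μ + σ * z))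
      nlinarith [gk_pos z, (gk_pos z).le, abs_nonneg (φ (x + (μ + σ * z)))]
  have hInt2 : Integrable (fun z : ℝ => gk z * (p + q * z + r * z ^ 2)) := by
    have heq : (fun z : ℝ => gk z * (p + q * z + r * z ^ 2))
        = fun z : ℝ => (p * gk z + q * (z * gk z)) + r * (z ^ 2 * gk z) := funext fun z => by ring
    rw [heq]
    exact ((integrable_gk.const_mul p).add (integrable_z_gk.const_mul q)).add
      (integrable_sq_gk.const_mul r)
  have hDint : Integrable
      (fun z : ℝ => 4 * M * |μ| ^ 3 * gk z + 4 * M * σ ^ 3 * (|z| ^ 3 * gk z)) :=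
    (integrable_gk.const_mul _).add ((integrable_pow_gk 3).const_mul _)
  have hptwise : ∀ z : ℝ,
      ‖gk z * φ (x + (μ + σ * z)) - gk z * (p + q * z + r * z ^ 2)‖
        ≤ 4 * M * |μ| ^ 3 * gk z + 4 * M * σ ^ 3 * (|z| ^ 3 * gk z) := by
    intro z
    set h := μ + σ * z with hh
    have hpoly : p + q * z + r * z ^ 2 = A + h * B + h ^ 2 / 2 * C := by
      rw [hp, hq, hr, hh]; ring
    have h1 : gk z * φ (x + h) - gk z * (p + q * z + r * z ^ 2)
        = gk z * (φ (x + h) - A - h * B - h ^ 2 / 2 * C) := by rw [hpoly]; ring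
    rw [Real.norm_eq_abs, h1, abs_mul, abs_of_pos (gk_pos z)]
    have h2 := hTay h
    have h3 : |h| ≤ |μ| + σ * |z| := by
      calc |h| ≤ |μ| + |σ * z| := abs_add_le _ _
        _ = |μ| + σ * |z| := by rw [abs_mul, abs_of_nonneg hσ]
    have h4 : |h| ^ 3 ≤ (|μ| + σ * |z|) ^ 3 :=
      pow_le_pow_left₀ (abs_nonneg h) h3 3
    have h5 : (|μ| + σ * |z|) ^ 3 ≤ 4 * |μ| ^ 3 + 4 * (σ * |z|) ^ 3 :=
      cube_add_le _ _ (abs_nonneg μ) (by positivity)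
    have h6 : |φ (x + h) - A - h * B - h ^ 2 / 2 * C|
        ≤ M * (4 * |μ| ^ 3 + 4 * σ ^ 3 * |z| ^ 3) := by
      calc |φ (x + h) - A - h * B - h ^ 2 / 2 * C| ≤ M * |h| ^ 3 := h2
        _ ≤ M * (4 * |μ| ^ 3 + 4 * σ ^ 3 * |z| ^ 3) := by nlinarith [mul_pow σ |z| 3]
    calc gk z * |φ (x + h) - A - h * B - h ^ 2 / 2 * C|
        ≤ gk z * (M * (4 * |μ| ^ 3 + 4 * σ ^ 3 * |z| ^ 3)) := by
          nlinarith [gk_pos z, (gk_pos z).le, abs_nonneg (φ (x + h) - A - h * B - h ^ 2 / 2 * C)]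
      _ = 4 * M * |μ| ^ 3 * gk z + 4 * M * σ ^ 3 * (|z| ^ 3 * gk z) := by ring
  have hDval : (∫ z : ℝ, (4 * M * |μ| ^ 3 * gk z + 4 * M * σ ^ 3 * (|z| ^ 3 * gk z)))
      = 4 * M * |μ| ^ 3 * Real.sqrt (2 * π) + 4 * M * σ ^ 3 * ∫ z : ℝ, |z| ^ 3 * gk z := by
    rw [integral_add (integrable_gk.const_mul _) ((integrable_pow_gk 3).const_mul _),
      integral_const_mul, integral_const_mul, integral_gk]
  have hmain : (∫ z : ℝ, gk z * φ (x + (μ + σ * z)))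
      - (p + r) * Real.sqrt (2 * π)
      = ∫ z : ℝ, (gk z * φ (x + (μ + σ * z)) - gk z * (p + q * z + r * z ^ 2)) := by
    rw [integral_sub hInt1 hInt2, hquad]
  have hnorm := norm_integral_le_of_norm_le hDint (ae_of_all _ hptwise)
  rw [← hmain, hDval] at hnorm
  have hpr : (p + r) = A + B * μ + C / 2 * (μ ^ 2 + σ ^ 2) := by rw [hp, hr]; ring
  rw [Real.norm_eq_abs] at hnorm
  calc |(∫ z : ℝ, gk z * φ (x + (μ + σ * z)))
        - (A + B * μ + C / 2 * (μ ^ 2 + σ ^ 2)) * Real.sqrt (2 * π)|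
      = |(∫ z : ℝ, gk z * φ (x + (μ + σ * z))) - (p + r) * Real.sqrt (2 * π)| := by
        rw [hpr]
    _ ≤ _ := hnorm

set_option maxHeartbeats 1000000 in
/-- First-order short-time expansion of the convolution of a smooth compactly supported
test function `φ` against the frozen-coefficient fundamental solution:
`I(Δt) = φ(x) + Δt (b φ'(x) + (a/2) φ''(x) + S φ(x)) + O(Δt^{3/2})` as `Δt → 0⁺`. -/
theorem frozen_solution_short_time_expansion
    (a b S x : ℝ) (ha : 0 < a)
    (φ : ℝ → ℝ) (hφ : ContDiff ℝ (⊤ : ℕ∞) φ) (hφsupp : HasCompactSupport φ)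
    (q : ℝ → ℝ → ℝ)
    (hq : ∀ t y, q t y =
      Real.exp (S * t) * (2 * π * a * t) ^ (-(1 : ℝ) / 2) *
        Real.exp (-(y - b * t) ^ 2 / (2 * a * t)))
    (I : ℝ → ℝ) (hI : ∀ Δt, I Δt = ∫ y : ℝ, q Δt (y - x) * φ y) :
    (fun Δt : ℝ => I Δt - φ x -
        Δt * (b * deriv φ x + (a / 2) * deriv (deriv φ) x + S * φ x))
      =O[nhdsWithin 0 (Set.Ioi 0)] (fun Δt : ℝ => Δt ^ (3 / 2 : ℝ)) := by
  obtain ⟨M, hM0, hTay⟩ := taylor3 φ hφ hφsupp x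
  obtain ⟨K, hKn⟩ := hφ.continuous.bounded_above_of_compact_support hφsupp
  have hK : ∀ y, |φ y| ≤ K := fun y => by simpa [Real.norm_eq_abs] using hKn y
  set A := φ x with hA
  set B := deriv φ x with hB
  set C := deriv (deriv φ) x with hC
  set c3 : ℝ := ∫ z : ℝ, |z| ^ 3 * gk z with hc3
  have hc3nn : 0 ≤ c3 := integral_nonneg fun z => mul_nonneg (by positivity) (gk_pos z).le
  set s2 : ℝ := Real.sqrt (2 * π) with hs2
  have hs2pos : 0 < s2 := Real.sqrt_pos.mpr (by positivity)
  set δ : ℝ := min 1 (|S| + 1)⁻¹ with hδ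
  have hδpos : 0 < δ := lt_min one_pos (by positivity)
  set Ctot : ℝ := |A| * S ^ 2 + 2 * |S| * |b * B| + 2 * |S| * |a / 2 * C|
      + Real.exp 1 * (|C| / 2 * b ^ 2)
      + Real.exp 1 * s2⁻¹ * (4 * M * |b| ^ 3 * s2 + 4 * M * (Real.sqrt a) ^ 3 * c3)
      with hCtot
  rw [Asymptotics.isBigO_iff]
  refine ⟨Ctot, ?_⟩
  filter_upwards [Ioo_mem_nhdsGT_of_mem (Set.mem_Ico.mpr ⟨le_refl (0:ℝ), hδpos⟩)] with t htmem
  obtain ⟨ht, htδ⟩ := htmem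
  have hat : 0 < a * t := mul_pos ha ht
  set u := Real.sqrt t with hu
  have hu0 : 0 < u := Real.sqrt_pos.mpr ht
  have hut : u ^ 2 = t := Real.sq_sqrt ht.le
  have ht1 : t ≤ 1 := le_of_lt (lt_of_lt_of_le htδ (min_le_left _ _))
  have hu1 : u ≤ 1 := by
    rw [hu, show (1:ℝ) = Real.sqrt 1 by simp]
    exact Real.sqrt_le_sqrt ht1
  have hu43 : u ^ 4 ≤ u ^ 3 := pow_le_pow_of_le_one hu0.le hu1 (by norm_num)
  have hu63 : u ^ 6 ≤ u ^ 3 := pow_le_pow_of_le_one hu0.le hu1 (by norm_num)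
  have hσ : Real.sqrt (a * t) = Real.sqrt a * u := by rw [hu, Real.sqrt_mul ha.le]
  have hσnn : (0:ℝ) ≤ Real.sqrt (a * t) := Real.sqrt_nonneg _
  -- value of I t
  have hIt : I t = Real.exp (S * t) * s2⁻¹ *
      ∫ z : ℝ, gk z * φ (x + (b * t + Real.sqrt (a * t) * z)) := by
    rw [hI t]
    simp_rw [hq]
    rw [change_of_var a b S x t ha ht φ]
    have hre : (fun z : ℝ => gk z * φ (x + b * t + Real.sqrt (a * t) * z))
        = fun z : ℝ => gk z * φ (x + (b * t + Real.sqrt (a * t) * z)) := by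
      funext z; rw [add_assoc]
    rw [hre]
  set Jt : ℝ := ∫ z : ℝ, gk z * φ (x + (b * t + Real.sqrt (a * t) * z)) with hJt
  have hJ := J_est φ hφ.continuous x M K hK hTay hM0 (b * t) (Real.sqrt (a * t)) hσnn
  rw [Real.sq_sqrt hat.le] at hJ
  set E := Real.exp (S * t) with hE
  have hE0 : 0 < E := Real.exp_pos _
  have hSt1 : |S * t| ≤ 1 := by
    have h9 : t ≤ (|S| + 1)⁻¹ := le_of_lt (lt_of_lt_of_le htδ (min_le_right _ _))
    rw [abs_mul, abs_of_pos ht]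
    have h10 : |S| * t ≤ |S| * (|S| + 1)⁻¹ := by
      apply mul_le_mul_of_nonneg_left h9 (abs_nonneg S)
    have h11 : |S| * (|S| + 1)⁻¹ ≤ 1 := by
      rw [← div_eq_mul_inv, div_le_one (by positivity : (0:ℝ) < |S| + 1)]
      linarith [abs_nonneg S]
    linarith
  have hEe : E ≤ Real.exp 1 := Real.exp_le_exp.mpr (le_trans (le_abs_self _) hSt1)
  have he1 : |E - 1 - S * t| ≤ S ^ 2 * t ^ 2 := by
    have := Real.abs_exp_sub_one_sub_id_le hSt1
    calc |E - 1 - S * t| ≤ (S * t) ^ 2 := this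
      _ = S ^ 2 * t ^ 2 := by ring
  have he2 : |E - 1| ≤ 2 * |S| * t := by
    have := Real.abs_exp_sub_one_le hSt1
    calc |E - 1| ≤ 2 * |S * t| := this
      _ = 2 * |S| * t := by rw [abs_mul, abs_of_pos ht]; ring
  set P : ℝ := A + B * (b * t) + C / 2 * ((b * t) ^ 2 + a * t) with hP
  set R : ℝ := Jt - P * s2 with hR
  have hRb : |R| ≤ 4 * M * |b * t| ^ 3 * s2 + 4 * M * (Real.sqrt (a * t)) ^ 3 * c3 := hJ
  have hexpr : I t - A - t * (b * B + a / 2 * C + S * A)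
      = (E - 1 - S * t) * A + (E - 1) * (b * B * t) + (E - 1) * (a / 2 * C * t)
        + E * (C / 2 * b ^ 2 * t ^ 2) + E * s2⁻¹ * R := by
    have hJt2 : Jt = P * s2 + R := by rw [hR]; ring
    rw [hIt, hJt2, hP]
    field_simp
    ring
  have habs5 : ∀ w1 w2 w3 w4 w5 : ℝ,
      |w1 + w2 + w3 + w4 + w5| ≤ |w1| + |w2| + |w3| + |w4| + |w5| := by
    intro w1 w2 w3 w4 w5
    linarith [abs_add_le (w1 + w2 + w3 + w4) w5, abs_add_le (w1 + w2 + w3) w4,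
      abs_add_le (w1 + w2) w3, abs_add_le w1 w2]
  have hw1 : |(E - 1 - S * t) * A| ≤ |A| * S ^ 2 * u ^ 3 := by
    rw [abs_mul]
    calc |E - 1 - S * t| * |A| ≤ (S ^ 2 * t ^ 2) * |A| :=
          mul_le_mul_of_nonneg_right he1 (abs_nonneg A)
      _ = |A| * S ^ 2 * u ^ 4 := by rw [← hut]; ring
      _ ≤ |A| * S ^ 2 * u ^ 3 := mul_le_mul_of_nonneg_left hu43 (by positivity)
  have hw2 : |(E - 1) * (b * B * t)| ≤ 2 * |S| * |b * B| * u ^ 3 := by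
    rw [abs_mul]
    have h16 : |b * B * t| = |b * B| * t := by rw [abs_mul, abs_of_pos ht]
    rw [h16]
    calc |E - 1| * (|b * B| * t) ≤ (2 * |S| * t) * (|b * B| * t) :=
          mul_le_mul_of_nonneg_right he2 (by positivity)
      _ = 2 * |S| * |b * B| * u ^ 4 := by rw [← hut]; ring
      _ ≤ 2 * |S| * |b * B| * u ^ 3 := mul_le_mul_of_nonneg_left hu43 (by positivity)
  have hw3 : |(E - 1) * (a / 2 * C * t)| ≤ 2 * |S| * |a / 2 * C| * u ^ 3 := by
    rw [abs_mul]
    have h16 : |a / 2 * C * t| = |a / 2 * C| * t := by rw [abs_mul, abs_of_pos ht]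
    rw [h16]
    calc |E - 1| * (|a / 2 * C| * t) ≤ (2 * |S| * t) * (|a / 2 * C| * t) :=
          mul_le_mul_of_nonneg_right he2 (by positivity)
      _ = 2 * |S| * |a / 2 * C| * u ^ 4 := by rw [← hut]; ring
      _ ≤ 2 * |S| * |a / 2 * C| * u ^ 3 := mul_le_mul_of_nonneg_left hu43 (by positivity)
  have hw4 : |E * (C / 2 * b ^ 2 * t ^ 2)| ≤ Real.exp 1 * (|C| / 2 * b ^ 2) * u ^ 3 := by
    rw [abs_mul, abs_of_pos hE0]
    have h17 : |C / 2 * b ^ 2 * t ^ 2| = |C| / 2 * b ^ 2 * t ^ 2 := by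
      rw [abs_mul, abs_mul, abs_div, abs_pow, abs_pow, sq_abs, sq_abs]
      norm_num
    rw [h17]
    calc E * (|C| / 2 * b ^ 2 * t ^ 2) ≤ Real.exp 1 * (|C| / 2 * b ^ 2 * t ^ 2) :=
          mul_le_mul_of_nonneg_right hEe (by positivity)
      _ = Real.exp 1 * (|C| / 2 * b ^ 2) * u ^ 4 := by rw [← hut]; ring
      _ ≤ Real.exp 1 * (|C| / 2 * b ^ 2) * u ^ 3 :=
          mul_le_mul_of_nonneg_left hu43 (by positivity)
  have hM4 : (0:ℝ) ≤ 4 * M := by linarith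
  have k1 : (0:ℝ) ≤ 4 * M * |b| ^ 3 * s2 :=
    mul_nonneg (mul_nonneg hM4 (pow_nonneg (abs_nonneg b) 3)) hs2pos.le
  have k2 : (0:ℝ) ≤ 4 * M * (Real.sqrt a) ^ 3 * c3 :=
    mul_nonneg (mul_nonneg hM4 (pow_nonneg (Real.sqrt_nonneg a) 3)) hc3nn
  have hρ : 4 * M * |b * t| ^ 3 * s2 + 4 * M * (Real.sqrt (a * t)) ^ 3 * c3
      ≤ (4 * M * |b| ^ 3 * s2 + 4 * M * (Real.sqrt a) ^ 3 * c3) * u ^ 3 := by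
    have h13 : |b * t| ^ 3 = |b| ^ 3 * u ^ 6 := by
      rw [abs_mul, abs_of_pos ht, ← hut]; ring
    have h14 : (Real.sqrt (a * t)) ^ 3 = (Real.sqrt a) ^ 3 * u ^ 3 := by rw [hσ]; ring
    rw [h13, h14]
    have h15 : (4 * M * |b| ^ 3 * s2) * u ^ 6 ≤ (4 * M * |b| ^ 3 * s2) * u ^ 3 :=
      mul_le_mul_of_nonneg_left hu63 k1
    have e1 : 4 * M * (|b| ^ 3 * u ^ 6) * s2 = (4 * M * |b| ^ 3 * s2) * u ^ 6 := by ring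
    have e2 : 4 * M * ((Real.sqrt a) ^ 3 * u ^ 3) * c3
        = (4 * M * (Real.sqrt a) ^ 3 * c3) * u ^ 3 := by ring
    have e3 : (4 * M * |b| ^ 3 * s2 + 4 * M * (Real.sqrt a) ^ 3 * c3) * u ^ 3
        = (4 * M * |b| ^ 3 * s2) * u ^ 3 + (4 * M * (Real.sqrt a) ^ 3 * c3) * u ^ 3 := by ring
    rw [e1, e2, e3]
    linarith
  have hw5 : |E * s2⁻¹ * R|
      ≤ Real.exp 1 * s2⁻¹ * (4 * M * |b| ^ 3 * s2 + 4 * M * (Real.sqrt a) ^ 3 * c3) * u ^ 3 := by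
    rw [abs_mul, abs_mul, abs_of_pos hE0, abs_of_pos (inv_pos.mpr hs2pos)]
    have hRρ : |R| ≤ (4 * M * |b| ^ 3 * s2 + 4 * M * (Real.sqrt a) ^ 3 * c3) * u ^ 3 :=
      hRb.trans hρ
    have hρnn : (0:ℝ) ≤ (4 * M * |b| ^ 3 * s2 + 4 * M * (Real.sqrt a) ^ 3 * c3) * u ^ 3 :=
      mul_nonneg (by linarith) (pow_nonneg hu0.le 3)
    calc E * s2⁻¹ * |R|
        ≤ E * s2⁻¹ * ((4 * M * |b| ^ 3 * s2 + 4 * M * (Real.sqrt a) ^ 3 * c3) * u ^ 3) :=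
          mul_le_mul_of_nonneg_left hRρ (by positivity)
      _ ≤ Real.exp 1 * s2⁻¹ *
            ((4 * M * |b| ^ 3 * s2 + 4 * M * (Real.sqrt a) ^ 3 * c3) * u ^ 3) := by
          apply mul_le_mul_of_nonneg_right _ hρnn
          exact mul_le_mul_of_nonneg_right hEe (inv_pos.mpr hs2pos).le
      _ = Real.exp 1 * s2⁻¹ * (4 * M * |b| ^ 3 * s2 + 4 * M * (Real.sqrt a) ^ 3 * c3) * u ^ 3 := by
          ring
  have hpow : t ^ ((3:ℝ) / 2) = u ^ 3 := by
    have h18 : t ^ ((3:ℝ) / 2) = (t ^ ((1:ℝ) / 2)) ^ (3:ℕ) := by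
      rw [← Real.rpow_natCast (t ^ ((1:ℝ) / 2)) 3, ← Real.rpow_mul ht.le]
      norm_num
    rw [h18, ← Real.sqrt_eq_rpow, ← hu]
  have hsum : Ctot * u ^ 3 = |A| * S ^ 2 * u ^ 3 + 2 * |S| * |b * B| * u ^ 3
      + 2 * |S| * |a / 2 * C| * u ^ 3 + Real.exp 1 * (|C| / 2 * b ^ 2) * u ^ 3
      + Real.exp 1 * s2⁻¹ * (4 * M * |b| ^ 3 * s2 + 4 * M * (Real.sqrt a) ^ 3 * c3) * u ^ 3 := by
    rw [hCtot]; ring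
  rw [Real.norm_eq_abs, Real.norm_eq_abs, hpow, abs_of_nonneg (pow_nonneg hu0.le 3)]
  calc |I t - A - t * (b * B + a / 2 * C + S * A)|
      = |(E - 1 - S * t) * A + (E - 1) * (b * B * t) + (E - 1) * (a / 2 * C * t)
          + E * (C / 2 * b ^ 2 * t ^ 2) + E * s2⁻¹ * R| := by rw [hexpr]
    _ ≤ |(E - 1 - S * t) * A| + |(E - 1) * (b * B * t)| + |(E - 1) * (a / 2 * C * t)|
          + |E * (C / 2 * b ^ 2 * t ^ 2)| + |E * s2⁻¹ * R| := habs5 _ _ _ _ _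
    _ ≤ Ctot * u ^ 3 := by rw [hsum]; linarith
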